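/- Let k be an odd positive integer, κ ≥ 0, s ≥ 0 integers, and suppose (√2)^κ · ((√6+√2)/2)^{k−2s} = 2cos(mπ/12) for some integer m. Then κ = 0 and k − 2s = ±1. -/

import Mathlib

/-!
Squaring, and using `((√6 + √2) / 2)² = 2 + √3` and `(2 cos θ)² = 2 + 2 cos 2θ`, the hypothesis
becomes `2^κ (2 + √3)^n = 2 + 2 cos (mπ/6)` with `n = k - 2s` odd. The right side is a natural
number or `(2 + √3)^{±1}`. All these numbers live in `ℤ[√3]`, where `2 + √3` is a unit of norm `1`:
comparing norms forces the natural-number factors on both sides to agree, after which the powers of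
`2 + √3 > 1` must agree too. A natural number on the right would give `n = 0`, which is not odd;
`(2 + √3)^{±1}` gives `2^κ = 1` and `n = ±1`.
-/

open Real

namespace Zsqrtd

theorem natCast_eq_of_natCast_mul_zpow_eq {d : ℤ} {ε : (ℤ√d)ˣ} (hε : (ε : ℤ√d).norm = 1)
    {a c : ℕ} {j : ℤ} (h : (a : ℤ√d) * ↑(ε ^ j) = c) : a = c := by
  have hεj : (↑(ε ^ j) : ℤ√d).norm = 1 := by
    have hε' : Units.map normMonoidHom ε = 1 := Units.ext hε
    have := congrArg Units.val (map_zpow (Units.map normMonoidHom) ε j)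
    rwa [hε', one_zpow, Units.coe_map, Units.val_one] at this
  have := congrArg norm h
  rw [norm_mul, hεj, norm_natCast, norm_natCast, mul_one] at this
  exact Nat.mul_self_inj.mp (by exact_mod_cast this)

end Zsqrtd

def twoAddSqrtThree : (ℤ√3)ˣ where
  val := ⟨2, 1⟩
  inv := ⟨2, -1⟩
  val_inv := by ext <;> rfl
  inv_val := by ext <;> rfl

noncomputable def sqrtThreeHom : ℤ√3 →+* ℝ := Zsqrtd.lift ⟨√3, mul_self_sqrt (by norm_num)⟩

theorem sqrtThreeHom_injective : Function.Injective sqrtThreeHom :=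
  Zsqrtd.lift_injective _ fun n hn => Int.prime_three.not_isSquare ⟨n, hn⟩

theorem sqrtThreeHom_twoAddSqrtThree_zpow (j : ℤ) :
    sqrtThreeHom ↑(twoAddSqrtThree ^ j) = (2 + √3) ^ j := by
  have := congrArg Units.val (map_zpow (Units.map (sqrtThreeHom : ℤ√3 →* ℝ)) twoAddSqrtThree j)
  rw [Units.val_zpow_eq_zpow_val, Units.coe_map, Units.coe_map] at this
  simpa [sqrtThreeHom, twoAddSqrtThree] using this

theorem natCast_mul_two_add_sqrt_three_zpow_inj {a c : ℕ} {n e : ℤ} (ha : a ≠ 0)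
    (h : (a : ℝ) * (2 + √3) ^ n = c * (2 + √3) ^ e) : a = c ∧ n = e := by
  have hβ : (0 : ℝ) < 2 + √3 := by positivity
  have hZ : (a : ℤ√3) * ↑(twoAddSqrtThree ^ (n - e)) = c := sqrtThreeHom_injective <| by
    rw [map_mul, map_natCast, map_natCast, sqrtThreeHom_twoAddSqrtThree_zpow, zpow_sub₀ hβ.ne',
      ← mul_div_assoc, h, mul_div_cancel_right₀ _ (zpow_pos hβ e).ne']
  obtain rfl := Zsqrtd.natCast_eq_of_natCast_mul_zpow_eq rfl hZ
  refine ⟨rfl, zpow_right_injective₀ hβ ?_ (mul_left_cancel₀ (Nat.cast_ne_zero.mpr ha) h)⟩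
  linarith [sqrt_nonneg 3]

theorem two_mul_cos_int_mul_pi_div_six_mem (m : ℤ) :
    2 * cos (m * π / 6) ∈ ({0, 1, -1, 2, -2, √3, -√3} : Set ℝ) := by
  obtain ⟨q, r, hr₁, hr₂, rfl⟩ : ∃ q r : ℤ, -2 ≤ r ∧ r ≤ 3 ∧ m = r + q * 6 :=
    ⟨(m + 2) / 6, (m + 2) % 6 - 2, by omega, by omega, by omega⟩
  rw [show ((r + q * 6 : ℤ) : ℝ) * π / 6 = r * π / 6 + q * π by push_cast; ring,
    cos_add_int_mul_pi]
  rcases q.even_or_odd with hq | hq <;> rw [hq.neg_one_zpow] <;> interval_cases r <;>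
    norm_num [show (2 : ℝ) * π / 6 = π / 3 by ring, show (3 : ℝ) * π / 6 = π / 2 by ring,
      neg_div, cos_pi_div_six, cos_pi_div_three, mul_div_cancel₀]

theorem two_add_two_cos_int_mul_pi_div_six (m : ℤ) :
    (∃ c : ℕ, 2 + 2 * cos (m * π / 6) = c) ∨
      ∃ e : ℤ, (e = 1 ∨ e = -1) ∧ 2 + 2 * cos (m * π / 6) = (2 + √3) ^ e := by
  rcases two_mul_cos_int_mul_pi_div_six_mem m with h | h | h | h | h | h | h <;> rw [h]
  · exact .inl ⟨2, by norm_num⟩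
  · exact .inl ⟨3, by norm_num⟩
  · exact .inl ⟨1, by norm_num⟩
  · exact .inl ⟨4, by norm_num⟩
  · exact .inl ⟨0, by norm_num⟩
  · exact .inr ⟨1, .inl rfl, (zpow_one _).symm⟩
  · refine .inr ⟨-1, .inr rfl, ?_⟩
    rw [zpow_neg_one, eq_comm]
    exact inv_eq_of_mul_eq_one_right (by linear_combination -(sq_sqrt (show (0:ℝ) ≤ 3 by norm_num)))

theorem sqrt_six_add_sqrt_two_div_two_sq : ((√6 + √2) / 2) ^ 2 = 2 + √3 := by
  have h62 : √6 * √2 = 2 * √3 := by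
    rw [← sqrt_mul (by norm_num), show (6 : ℝ) * 2 = 2 ^ 2 * 3 by norm_num, sqrt_mul (by norm_num),
      sqrt_sq (by norm_num)]
  linear_combination (sq_sqrt (show (0 : ℝ) ≤ 6 by norm_num)) / 4 +
    (sq_sqrt (show (0 : ℝ) ≤ 2 by norm_num)) / 4 + h62 / 2

theorem sqrt_two_pow_eq_two_cos_general (k : ℕ) (hk : Odd k)
    (κ s : ℕ) (m : ℤ)
    (h : Real.sqrt 2 ^ κ * ((Real.sqrt 6 + Real.sqrt 2) / 2) ^ ((k : ℤ) - 2 * s) =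
      2 * Real.cos (m * Real.pi / 12)) :
    κ = 0 ∧ ((k : ℤ) - 2 * s = 1 ∨ (k : ℤ) - 2 * s = -1) := by
  set n : ℤ := (k : ℤ) - 2 * s
  have hn : n ≠ 0 := by
    obtain ⟨j, hj⟩ := hk
    omega
  have hsq : ((2 ^ κ : ℕ) : ℝ) * (2 + √3) ^ n = 2 + 2 * cos (m * π / 6) := calc
    _ = (√2 ^ 2) ^ κ * (((√6 + √2) / 2) ^ 2) ^ n := by
      rw [sq_sqrt zero_le_two, sqrt_six_add_sqrt_two_div_two_sq, Nat.cast_pow, Nat.cast_ofNat]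
    _ = (√2 ^ κ * ((√6 + √2) / 2) ^ n) ^ 2 := by
      rw [mul_pow, ← pow_mul, ← pow_mul', sq (_ ^ n), sq ((√6 + √2) / 2), mul_zpow]
    _ = 2 + 2 * cos (m * π / 6) := by
      rw [h, mul_pow, cos_sq]; ring_nf
  rcases two_add_two_cos_int_mul_pi_div_six m with ⟨c, hc⟩ | ⟨e, he, hc⟩
  · exact absurd (natCast_mul_two_add_sqrt_three_zpow_inj (e := 0) (Nat.two_pow_pos κ).ne'
      (by rw [hsq, hc, zpow_zero, mul_one])).2 hn
  · obtain ⟨hκ, rfl⟩ := natCast_mul_two_add_sqrt_three_zpow_inj (c := 1) (Nat.two_pow_pos κ).ne'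
      (by rw [hsq, hc, Nat.cast_one, one_mul])
    exact ⟨by simpa using hκ, he⟩

/-- If `k` is an odd positive integer, `κ, s ≥ 0` integers, and
`(√2)^κ · ((√6+√2)/2)^{k−2s} = 2cos(mπ/12)` for some integer `m`, then
`κ = 0` and `k − 2s = ±1`. -/
theorem sqrt_two_pow_eq_two_cos (k : ℕ) (hk : Odd k) (hkpos : 0 < k)
    (κ s : ℕ) (m : ℤ)
    (h : Real.sqrt 2 ^ κ * ((Real.sqrt 6 + Real.sqrt 2) / 2) ^ ((k : ℤ) - 2 * s) =
      2 * Real.cos (m * Real.pi / 12)) :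
    κ = 0 ∧ ((k : ℤ) - 2 * s = 1 ∨ (k : ℤ) - 2 * s = -1) :=
  sqrt_two_pow_eq_two_cos_general k hk κ s m h
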